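/- With the notation of the previous item (ω = p + q·1_{(a,b)}, 0 < a < b), the unique locally bounded solution 𝒲^{(ω)} of the ω-scale equation satisfies, for all x ≥ 0, 𝒲^{(ω)}(x) = 𝒲_a^{(p,q)}(x) − q ∫_b^x W^{(p)}(x−z) 𝒲_a^{(p,q)}(z) dz, where 𝒲_a^{(p,q)}(x) = W^{(p)}(x) + q ∫_a^x W^{(p+q)}(x−y) W^{(p)}(y) dy and 𝒲_a^{(p,q)} itself satisfies 𝒲_a^{(p,q)}(x) = W^{(p)}(x) + q ∫_a^x W^{(p)}(x−z) 𝒲_a^{(p,q)}(z) dz for all x ≥ 0. -/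

import Mathlib

/-!
Expanding `𝒲_a^{(p,q)}` and swapping the order of integration over the triangle
`a ≤ y ≤ z ≤ x`, the resolvent identity `W^{(p+q)} - W^{(p)} = q W^{(p+q)} ∗ W^{(p)}` collapses the
inner integral to `W^{(p+q)}(x - y) - W^{(p)}(x - y)`; this is the equation for `𝒲_a^{(p,q)}`.
The right-hand side `G` of the second identity equals `𝒲_a^{(p,q)}` below `b`, so by that equation
`G` solves the `ω`-scale equation, and it remains to show that this equation has only one locally
bounded solution.

If `W^{(p)}` vanishes on `[0, r]` for some `r > 0`, two solutions agree on `[0, r)`, `[0, 2r)`, ….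
Otherwise `W^{(p)} > 0` on `(0, ∞)`. A locally bounded solution `f` is not assumed measurable, and
the integral of a non-integrable function is `0`; but the integrand `W^{(p)}(x - ·) ω f` is integrable
on `[0, x]` exactly when `ω f` is a.e.-measurable on `(0, x)`, and wherever it is not, the equation
reads `f(x) = W^{(p)}(x)`. Taking the infimum of the bad points shows that `ω f` is a.e.-measurable
everywhere. Then the difference `D` of two solutions satisfies `|D(x)| ≤ K ∫₀ˣ |D|`, and Picard
iteration gives `|D(x)| ≤ M (K x)ⁿ / n! → 0`.
-/

open Set MeasureTheory intervalIntegral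

def LocallyBdd (f : ℝ → ℝ) : Prop :=
  ∀ K : Set ℝ, IsCompact K → ∃ M : ℝ, ∀ x ∈ K, |f x| ≤ M

open Filter Topology
open scoped Nat

theorem Continuous.locallyBdd {f : ℝ → ℝ} (hf : Continuous f) : LocallyBdd f :=
  fun _ hK => hK.exists_bound_of_continuousOn hf.continuousOn

theorem LocallyBdd.mul {f g : ℝ → ℝ} (hf : LocallyBdd f) (hg : LocallyBdd g) :
    LocallyBdd (f * g) := by
  intro K hK
  obtain ⟨M, hM⟩ := hf K hK
  obtain ⟨N, hN⟩ := hg K hK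
  refine ⟨M * N, fun x hx => ?_⟩
  rw [Pi.mul_apply, abs_mul]
  exact mul_le_mul (hM x hx) (hN x hx) (abs_nonneg _) ((abs_nonneg _).trans (hM x hx))

theorem LocallyBdd.sub {f g : ℝ → ℝ} (hf : LocallyBdd f) (hg : LocallyBdd g) :
    LocallyBdd (f - g) := by
  intro K hK
  obtain ⟨M, hM⟩ := hf K hK
  obtain ⟨N, hN⟩ := hg K hK
  exact ⟨M + N, fun x hx => (abs_sub _ _).trans (add_le_add (hM x hx) (hN x hx))⟩

theorem eq_zero_of_nonpos_of_continuous {k : ℝ → ℝ} (hk : Continuous k)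
    (hneg : ∀ x < 0, k x = 0) {x : ℝ} (hx : x ≤ 0) : k x = 0 := by
  have h : closure (Iio 0) ⊆ {x | k x = 0} :=
    (isClosed_eq hk continuous_const).closure_subset_iff.2 hneg
  exact h (by rwa [closure_Iio])

theorem exists_eq_zero_Iic_or_ne_zero {k : ℝ → ℝ} (hk : Continuous k)
    (hmono : MonotoneOn k (Ici 0)) (hneg : ∀ x < 0, k x = 0) :
    (∃ r > 0, ∀ t ≤ r, k t = 0) ∨ ∀ t > 0, k t ≠ 0 := by
  by_cases h : ∃ r > 0, k r = 0
  · obtain ⟨r, hr, hkr⟩ := h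
    refine Or.inl ⟨r, hr, fun t ht => ?_⟩
    rcases lt_or_ge t 0 with ht0 | ht0
    · exact hneg t ht0
    · have h0 := eq_zero_of_nonpos_of_continuous hk hneg le_rfl
      have h1 := hmono self_mem_Ici ht0 ht0
      have h2 := hmono ht0 (mem_Ici.2 hr.le) ht
      linarith
  · push Not at h
    exact Or.inr h

-- Phrased through integrable majorants `B` of `|D|` because `D` need not be measurable.
theorem eq_zero_of_abs_le_mul_integral {D : ℝ → ℝ} {x M K : ℝ}
    (hM : ∀ y ∈ Icc 0 x, |D y| ≤ M)
    (hD : ∀ y ∈ Icc 0 x, ∀ B : ℝ → ℝ, IntervalIntegrable B volume 0 y →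
      (∀ z ∈ Icc 0 y, |D z| ≤ B z) → |D y| ≤ K * ∫ z in (0:ℝ)..y, B z) :
    ∀ y ∈ Icc 0 x, D y = 0 := by
  have picard : ∀ n : ℕ, ∀ y ∈ Icc 0 x, |D y| ≤ M * K ^ n / n ! * y ^ n := by
    intro n
    induction n with
    | zero => simpa using hM
    | succ n ih =>
      intro y hy
      refine (hD y hy _ (by apply Continuous.intervalIntegrable; fun_prop)
        fun z hz => ih z ⟨hz.1, hz.2.trans hy.2⟩).trans_eq ?_
      rw [intervalIntegral.integral_const_mul, integral_pow, Nat.factorial_succ]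
      push_cast
      field_simp
      ring
  intro y hy
  have hlim : Tendsto (fun n : ℕ => M * ((K * y) ^ n / n !)) atTop (𝓝 0) := by
    simpa using (FloorSemiring.tendsto_pow_div_factorial_atTop (K * y)).const_mul M
  refine abs_nonpos_iff.1 (ge_of_tendsto' hlim fun n => (picard n y hy).trans_eq ?_)
  ring

theorem intervalIntegrable_mul_iff_aemeasurable {k g : ℝ → ℝ} (hk : Continuous k)
    (hkpos : ∀ t > 0, k t ≠ 0) {y M : ℝ} (hy : 0 ≤ y) (hg : ∀ z ∈ Ioo 0 y, |g z| ≤ M) :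
    IntervalIntegrable (fun z => k (y - z) * g z) volume 0 y ↔
      AEMeasurable g (volume.restrict (Ioo 0 y)) := by
  rw [intervalIntegrable_iff_integrableOn_Ioo_of_le hy]
  have hk' : Continuous fun z => k (y - z) := by fun_prop
  constructor
  · intro h
    refine ((hk'.measurable.inv.aemeasurable).mul h.aestronglyMeasurable.aemeasurable).congr ?_
    filter_upwards [ae_restrict_mem measurableSet_Ioo] with z hz
    have : k (y - z) ≠ 0 := hkpos _ (sub_pos.2 hz.2)
    simp only [Pi.mul_apply, Pi.inv_apply]
    field_simp
  · intro h
    obtain ⟨C, hC⟩ := isCompact_Icc.exists_bound_of_continuousOn (s := Icc 0 y) hk.continuousOn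
    refine Integrable.mono' (integrable_const (C * M))
      (hk'.aemeasurable.mul h).aestronglyMeasurable ?_
    filter_upwards [ae_restrict_mem measurableSet_Ioo] with z hz
    rw [Real.norm_eq_abs, abs_mul]
    have hkz := hC (y - z) ⟨by linarith [hz.2], by linarith [hz.1]⟩
    rw [Real.norm_eq_abs] at hkz
    exact mul_le_mul hkz (hg z hz) (abs_nonneg _) ((abs_nonneg _).trans hkz)

theorem aemeasurable_restrict_Ioo_of_forall_or {g g₀ : ℝ → ℝ} (hg₀ : Measurable g₀)
    (h : ∀ y > 0, AEMeasurable g (volume.restrict (Ioo 0 y)) ∨ g y = g₀ y) (y : ℝ) :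
    AEMeasurable g (volume.restrict (Ioo 0 y)) := by
  by_contra hy
  set S := {t | ¬ AEMeasurable g (volume.restrict (Ioo 0 t))}
  have hS_pos : ∀ t ∈ S, 0 < t := fun t ht => by
    by_contra! h0
    exact ht (by rw [Ioo_eq_empty (not_lt.2 h0), Measure.restrict_empty]; fun_prop)
  have hS_bdd : BddBelow S := ⟨0, fun t ht => (hS_pos t ht).le⟩
  have below : ∀ t < sInf S, AEMeasurable g (volume.restrict (Ioo 0 t)) :=
    fun t ht => not_not.1 (notMem_of_lt_csInf ht hS_bdd)
  have above : ∀ t > sInf S, g t = g₀ t := fun t ht => by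
    obtain ⟨s, hs, hst⟩ := (csInf_lt_iff hS_bdd ⟨y, hy⟩).1 ht
    refine (h t ((hS_pos s hs).trans hst)).resolve_left fun ht' => hs ?_
    exact ht'.mono_measure (Measure.restrict_mono (Ioo_subset_Ioo_right hst.le) le_rfl)
  have cover : Ioo 0 y ⊆ (⋃ n : ℕ, Ioo 0 (sInf S - 1 / (n + 1))) ∪ Ici (sInf S) := by
    intro z hz
    rcases lt_or_ge z (sInf S) with hz' | hz'
    · obtain ⟨n, hn⟩ := exists_nat_one_div_lt (sub_pos.2 hz')
      exact Or.inl (mem_iUnion.2 ⟨n, hz.1, by linarith⟩)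
    · exact Or.inr hz'
  refine hy (AEMeasurable.mono_measure ?_ (Measure.restrict_mono cover le_rfl))
  refine aemeasurable_union_iff.2
    ⟨aemeasurable_iUnion_iff.2 fun n => below _ (sub_lt_self _ (by positivity)), ?_⟩
  rw [Measure.restrict_congr_set Ioi_ae_eq_Ici.symm]
  exact hg₀.aemeasurable.congr
    ((ae_restrict_mem measurableSet_Ioi).mono fun t ht => (above t ht).symm)

def IsVolterraSolution (k h ω : ℝ → ℝ) (q : ℝ) (f : ℝ → ℝ) : Prop :=
  ∀ x ≥ (0:ℝ), f x = h x + q * ∫ z in (0:ℝ)..x, k (x - z) * ω z * f z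

namespace IsVolterraSolution

variable {k h ω f f₁ f₂ : ℝ → ℝ} {q : ℝ}

theorem intervalIntegrable (hf : IsVolterraSolution k h ω q f) (hk : Continuous k)
    (hkpos : ∀ t > 0, k t ≠ 0) (hh : Measurable h) (hω : Measurable ω) (hωb : LocallyBdd ω)
    (hfb : LocallyBdd f) {y : ℝ} (hy : 0 ≤ y) :
    IntervalIntegrable (fun z => k (y - z) * ω z * f z) volume 0 y := by
  have bound : ∀ t, ∃ M, ∀ z ∈ Ioo 0 t, |(ω * f) z| ≤ M := fun t =>
    (hωb.mul hfb (Icc 0 t) isCompact_Icc).imp fun _ hM z hz => hM z (Ioo_subset_Icc_self hz)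
  suffices IntervalIntegrable (fun z => k (y - z) * (ω * f) z) volume 0 y by
    simpa only [Pi.mul_apply, mul_assoc] using this
  obtain ⟨M, hM⟩ := bound y
  rw [intervalIntegrable_mul_iff_aemeasurable (g := ω * f) hk hkpos hy hM]
  refine aemeasurable_restrict_Ioo_of_forall_or (hω.mul hh) (fun t ht => ?_) y
  obtain ⟨N, hN⟩ := bound t
  rw [← intervalIntegrable_mul_iff_aemeasurable hk hkpos ht.le hN]
  by_cases hint : IntervalIntegrable (fun z => k (t - z) * (ω * f) z) volume 0 t
  · exact Or.inl hint
  · refine Or.inr ?_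
    simp only [Pi.mul_apply, ← mul_assoc] at hint ⊢
    rw [hf t ht.le, integral_undef hint, mul_zero, add_zero]

theorem eq_of_intervalIntegrable (hf₁ : IsVolterraSolution k h ω q f₁)
    (hf₂ : IsVolterraSolution k h ω q f₂) (hk : Continuous k) (hωb : LocallyBdd ω)
    (hb₁ : LocallyBdd f₁) (hb₂ : LocallyBdd f₂)
    (hi₁ : ∀ y ≥ 0, IntervalIntegrable (fun z => k (y - z) * ω z * f₁ z) volume 0 y)
    (hi₂ : ∀ y ≥ 0, IntervalIntegrable (fun z => k (y - z) * ω z * f₂ z) volume 0 y) :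
    ∀ x ≥ 0, f₁ x = f₂ x := by
  intro x hx
  obtain ⟨Mk, hMk⟩ := hk.locallyBdd (Icc 0 x) isCompact_Icc
  obtain ⟨Mω, hMω⟩ := hωb (Icc 0 x) isCompact_Icc
  obtain ⟨M, hM⟩ := hb₁.sub hb₂ (Icc 0 x) isCompact_Icc
  have hMk0 : 0 ≤ Mk := (abs_nonneg _).trans (hMk x ⟨hx, le_rfl⟩)
  have hMω0 : 0 ≤ Mω := (abs_nonneg _).trans (hMω x ⟨hx, le_rfl⟩)
  refine sub_eq_zero.1 (eq_zero_of_abs_le_mul_integral (K := |q| * (Mk * Mω)) hM ?_ x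
    ⟨hx, le_rfl⟩)
  intro y hy B hB hDB
  have hdiff : (f₁ - f₂) y = q * ∫ z in (0:ℝ)..y, k (y - z) * ω z * (f₁ - f₂) z := by
    simp only [Pi.sub_apply, mul_sub]
    rw [integral_sub (hi₁ y hy.1) (hi₂ y hy.1), hf₁ y hy.1, hf₂ y hy.1]
    ring
  rw [hdiff, abs_mul, mul_assoc, ← intervalIntegral.integral_const_mul]
  refine mul_le_mul_of_nonneg_left ?_ (abs_nonneg q)
  rw [← Real.norm_eq_abs]
  refine norm_integral_le_of_norm_le hy.1 (ae_of_all _ fun z hz => ?_) (hB.const_mul _)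
  have hzx : z ∈ Icc 0 x := ⟨hz.1.le, hz.2.trans hy.2⟩
  rw [Real.norm_eq_abs, abs_mul, abs_mul]
  refine mul_le_mul (mul_le_mul (hMk _ ⟨?_, ?_⟩) (hMω z hzx) (abs_nonneg _) hMk0)
    (hDB z ⟨hz.1.le, hz.2⟩) (abs_nonneg _) (mul_nonneg hMk0 hMω0)
  · linarith [hz.2]
  · linarith [hz.1, hy.2]

theorem eq_of_eq_zero_Iic (hf₁ : IsVolterraSolution k h ω q f₁)
    (hf₂ : IsVolterraSolution k h ω q f₂) {r : ℝ} (hr : 0 < r) (hkr : ∀ t ≤ r, k t = 0) :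
    ∀ x ≥ 0, f₁ x = f₂ x := by
  have step : ∀ n : ℕ, ∀ x ∈ Ico 0 (n * r), f₁ x = f₂ x := by
    intro n
    induction n with
    | zero => simp
    | succ n ih =>
      intro x hx
      rw [hf₁ x hx.1, hf₂ x hx.1]
      congr 2
      refine integral_congr fun z hz => ?_
      rw [uIcc_of_le hx.1] at hz
      rcases lt_or_ge z (n * r) with hzn | hzn
      · rw [ih z ⟨hz.1, hzn⟩]
      · have hxz : x - z ≤ r := by push_cast at hx; linarith [hx.2]
        simp only [hkr _ hxz, zero_mul]
  intro x hx
  obtain ⟨n, hn⟩ := exists_nat_gt (x / r)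
  exact step n x ⟨hx, by rwa [div_lt_iff₀ hr] at hn⟩

theorem eq_of_locallyBdd (hf₁ : IsVolterraSolution k h ω q f₁)
    (hf₂ : IsVolterraSolution k h ω q f₂) (hk : Continuous k) (hkmono : MonotoneOn k (Ici 0))
    (hkneg : ∀ x < 0, k x = 0) (hh : Measurable h) (hω : Measurable ω) (hωb : LocallyBdd ω)
    (hb₁ : LocallyBdd f₁) (hb₂ : LocallyBdd f₂) :
    ∀ x ≥ 0, f₁ x = f₂ x := by
  rcases exists_eq_zero_Iic_or_ne_zero hk hkmono hkneg with ⟨r, hr, hkr⟩ | hkpos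
  · exact hf₁.eq_of_eq_zero_Iic hf₂ hr hkr
  · exact hf₁.eq_of_intervalIntegrable hf₂ hk hωb hb₁ hb₂
      (fun _ hy => hf₁.intervalIntegrable hk hkpos hh hω hωb hb₁ hy)
      (fun _ hy => hf₂.intervalIntegrable hk hkpos hh hω hωb hb₂ hy)

end IsVolterraSolution

theorem integral_integral_triangle_swap {f : ℝ → ℝ → ℝ} (hf : Continuous (Function.uncurry f))
    {a x : ℝ} (hax : a ≤ x) :
    ∫ z in a..x, ∫ y in a..z, f z y = ∫ y in a..x, ∫ z in y..x, f z y := by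
  set g : ℝ → ℝ → ℝ := Function.curry ({p : ℝ × ℝ | p.2 ≤ p.1}.indicator (Function.uncurry f))
  have hg : Integrable (Function.uncurry g)
      ((volume.restrict (Ioc a x)).prod (volume.restrict (Ioc a x))) := by
    obtain ⟨C, hC⟩ := (isCompact_Icc.prod isCompact_Icc).exists_bound_of_continuousOn
      (s := Icc a x ×ˢ Icc a x) hf.continuousOn
    rw [Measure.prod_restrict, Function.uncurry_curry]
    have hm := hf.measurable.indicator (measurableSet_le measurable_snd measurable_fst)
    refine Measure.integrableOn_of_bounded (M := C) ?_ hm.aestronglyMeasurable ?_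
    · rw [Measure.prod_prod]
      exact ENNReal.mul_ne_top measure_Ioc_lt_top.ne measure_Ioc_lt_top.ne
    · filter_upwards [ae_restrict_mem (measurableSet_Ioc.prod measurableSet_Ioc)] with p hp
      exact (norm_indicator_le_norm_self _ _).trans
        (hC p ⟨Ioc_subset_Icc_self hp.1, Ioc_subset_Icc_self hp.2⟩)
  have inner₁ : ∀ z ∈ Ioc a x, ∫ y in a..z, f z y = ∫ y in Ioc a x, g z y := by
    intro z hz
    have : g z = (Iic z).indicator (f z) := funext fun y => by simp [g, indicator_apply]
    rw [this, setIntegral_indicator measurableSet_Iic, Ioc_inter_Iic, min_eq_right hz.2,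
      integral_of_le hz.1.le]
  have inner₂ : ∀ y ∈ Ioc a x, ∫ z in y..x, f z y = ∫ z in Ioc a x, g z y := by
    intro y hy
    have : (fun z => g z y) = (Ici y).indicator (fun z => f z y) :=
      funext fun z => by simp [g, indicator_apply]
    have hIcc : Ioc a x ∩ Ici y = Icc y x := by
      ext w
      simp only [mem_inter_iff, mem_Ioc, mem_Ici, mem_Icc]
      exact ⟨fun h => ⟨h.2, h.1.2⟩, fun h => ⟨⟨hy.1.trans_le h.1, h.2⟩, h.1⟩⟩
    rw [this, setIntegral_indicator measurableSet_Ici, hIcc, integral_Icc_eq_integral_Ioc,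
      integral_of_le hy.2]
  rw [integral_of_le hax, integral_of_le hax, setIntegral_congr_fun measurableSet_Ioc inner₁,
    setIntegral_congr_fun measurableSet_Ioc inner₂]
  exact integral_integral_swap hg

theorem continuous_integral_mul_sub {k f : ℝ → ℝ} (hk : Continuous k) (hf : Continuous f)
    (c : ℝ) : Continuous fun x => ∫ z in c..x, k (x - z) * f z :=
  continuous_parametric_intervalIntegral_of_continuous (by fun_prop) continuous_id

theorem integral_mul_sub_eq_conv (k l : ℝ → ℝ) (y x : ℝ) :
    ∫ z in y..x, k (x - z) * l (z - y) = ∫ s in (0:ℝ)..(x - y), l (x - y - s) * k s := by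
  have h := integral_comp_sub_left (fun s => l (x - y - s) * k s) (a := y) (b := x) x
  rw [sub_self] at h
  rw [← h]
  refine integral_congr fun z _ => ?_
  rw [sub_sub_sub_cancel_left, mul_comm]

theorem integral_conv_eq_of_resolvent {Wp Wpq : ℝ → ℝ} {q a : ℝ} (hWp : Continuous Wp)
    (hWpq : Continuous Wpq) (hWp0 : ∀ x ≤ 0, Wp x = 0) (hWpq0 : ∀ x ≤ 0, Wpq x = 0)
    (hres : ∀ x ≥ (0:ℝ), Wpq x - Wp x = q * ∫ y in (0:ℝ)..x, Wpq (x - y) * Wp y) (x : ℝ) :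
    ∫ y in a..x, Wpq (x - y) * Wp y =
      ∫ z in a..x, Wp (x - z) * (Wp z + q * ∫ y in a..z, Wpq (z - y) * Wp y) := by
  rcases le_or_gt a x with hax | hxa
  · have hsplit : ∀ z, Wp (x - z) * (Wp z + q * ∫ y in a..z, Wpq (z - y) * Wp y) =
        Wp (x - z) * Wp z + q * ∫ y in a..z, Wp (x - z) * (Wpq (z - y) * Wp y) := fun z => by
      rw [intervalIntegral.integral_const_mul]
      ring
    have hcont : Continuous fun z => q * ∫ y in a..z, Wp (x - z) * (Wpq (z - y) * Wp y) :=
      continuous_const.mul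
        (continuous_parametric_intervalIntegral_of_continuous (by fun_prop) continuous_id)
    symm
    calc ∫ z in a..x, Wp (x - z) * (Wp z + q * ∫ y in a..z, Wpq (z - y) * Wp y)
        = (∫ z in a..x, Wp (x - z) * Wp z) +
            q * ∫ z in a..x, ∫ y in a..z, Wp (x - z) * (Wpq (z - y) * Wp y) := by
          simp only [hsplit]
          rw [intervalIntegral.integral_add (by apply Continuous.intervalIntegrable; fun_prop)
            (hcont.intervalIntegrable _ _),
            intervalIntegral.integral_const_mul]
      _ = (∫ z in a..x, Wp (x - z) * Wp z) +
            ∫ y in a..x, Wp y * (q * ∫ z in y..x, Wp (x - z) * Wpq (z - y)) := by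
          rw [integral_integral_triangle_swap (by fun_prop) hax,
            ← intervalIntegral.integral_const_mul]
          congr 1
          refine integral_congr fun y _ => ?_
          simp only [← intervalIntegral.integral_const_mul]
          congr 1 with z
          ring
      _ = (∫ z in a..x, Wp (x - z) * Wp z) + ∫ y in a..x, Wp y * (Wpq (x - y) - Wp (x - y)) := by
          congr 1
          refine integral_congr fun y hy => ?_
          rw [uIcc_of_le hax] at hy
          rw [integral_mul_sub_eq_conv, hres (x - y) (sub_nonneg.2 hy.2)]
      _ = ∫ y in a..x, Wpq (x - y) * Wp y := by
          rw [← intervalIntegral.integral_add (by apply Continuous.intervalIntegrable; fun_prop)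
            (by apply Continuous.intervalIntegrable; fun_prop)]
          congr 1 with y
          ring
  · have hvanish : ∀ z ∈ uIcc a x, x - z ≤ 0 := fun z hz => by
      rw [uIcc_of_ge hxa.le] at hz
      linarith [hz.1]
    calc ∫ y in a..x, Wpq (x - y) * Wp y = ∫ _ in a..x, (0:ℝ) :=
          integral_congr fun y hy => by simp [hWpq0 _ (hvanish y hy)]
      _ = ∫ z in a..x, Wp (x - z) * (Wp z + q * ∫ y in a..z, Wpq (z - y) * Wp y) :=
          (integral_congr fun z hz => by simp [hWp0 _ (hvanish z hz)]).symm

theorem integral_indicator_Ioo_eq_integral {g : ℝ → ℝ} {a b x : ℝ} (ha : 0 ≤ a) (hab : a ≤ b)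
    (hx : 0 ≤ x) (hg : ∀ z > x, g z = 0) :
    ∫ z in (0:ℝ)..x, (Ioo a b).indicator g z = ∫ z in a..b, g z := by
  rw [integral_of_le hx, integral_of_le hab, setIntegral_indicator measurableSet_Ioo,
    integral_Ioc_eq_integral_Ioo,
    setIntegral_eq_of_subset_of_forall_sdiff_eq_zero measurableSet_Ioo inter_subset_right]
  rintro z ⟨hz, hz'⟩
  refine hg z (not_le.1 fun hzx => hz' ⟨⟨ha.trans_lt hz.1, hzx⟩, hz⟩)

theorem isVolterraSolution_sub_integral {Wp F : ℝ → ℝ} {a b q : ℝ} (ha : 0 ≤ a) (hab : a ≤ b)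
    (hWp : Continuous Wp) (hF : Continuous F) (hWp0 : ∀ x ≤ 0, Wp x = 0)
    (hFeq : ∀ x ≥ (0:ℝ), F x = Wp x + q * ∫ z in a..x, Wp (x - z) * F z) :
    IsVolterraSolution Wp Wp ((Ioo a b).indicator fun _ => (1:ℝ)) q
      (fun x => F x - q * ∫ z in b..x, Wp (x - z) * F z) := by
  have below_b : ∀ z ≤ b, F z - q * ∫ w in b..z, Wp (z - w) * F w = F z := by
    intro z hzb
    rw [integral_congr (g := fun _ => 0) fun w hw => ?_, intervalIntegral.integral_zero, mul_zero,
      sub_zero]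
    rw [uIcc_of_ge hzb] at hw
    simp [hWp0 (z - w) (by linarith [hw.1])]
  intro x hx
  have hind : ∀ z, Wp (x - z) * (Ioo a b).indicator (fun _ => (1:ℝ)) z *
      (F z - q * ∫ w in b..z, Wp (z - w) * F w) =
        (Ioo a b).indicator (fun z => Wp (x - z) * F z) z := by
    intro z
    by_cases hz : z ∈ Ioo a b
    · simp [indicator_of_mem hz, below_b z hz.2.le]
    · simp [indicator_of_notMem hz]
  simp only [hind]
  rw [integral_indicator_Ioo_eq_integral ha hab hx fun z hz => by simp [hWp0 (x - z) (by linarith)],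
    ← integral_interval_sub_left (a := a) (b := x) (c := b)
      (by apply Continuous.intervalIntegrable; fun_prop)
      (by apply Continuous.intervalIntegrable; fun_prop), hFeq x hx]
  ring

theorem occupation_scale_global_general
    (a b q : ℝ) (ha : 0 < a) (hab : a < b)
    (Wp Wpq 𝒲 : ℝ → ℝ)
    (hWpcont : Continuous Wp) (hWpqcont : Continuous Wpq)
    (hWpmono : MonotoneOn Wp (Set.Ici 0))
    (hWpneg : ∀ x < (0:ℝ), Wp x = 0) (hWpqneg : ∀ x < (0:ℝ), Wpq x = 0)
    (hres : ∀ x ≥ (0:ℝ),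
      Wpq x - Wp x = q * ∫ y in (0:ℝ)..x, Wpq (x - y) * Wp y)
    (h𝒲 : LocallyBdd 𝒲)
    (heq : ∀ x ≥ (0:ℝ), 𝒲 x = Wp x +
      q * ∫ z in (0:ℝ)..x, Wp (x - z) * Set.indicator (Set.Ioo a b) (fun _ => (1:ℝ)) z * 𝒲 z) :
    -- with 𝒲_a^{(p,q)}(x) := W^{(p)}(x) + q ∫_a^x W^{(p+q)}(x-y) W^{(p)}(y) dy :
    (∀ x ≥ (0:ℝ),
      (Wp x + q * ∫ y in a..x, Wpq (x - y) * Wp y) =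
        Wp x + q * ∫ z in a..x, Wp (x - z) * (Wp z + q * ∫ y in a..z, Wpq (z - y) * Wp y)) ∧
    (∀ x ≥ (0:ℝ),
      𝒲 x = (Wp x + q * ∫ y in a..x, Wpq (x - y) * Wp y) -
        q * ∫ z in b..x, Wp (x - z) * (Wp z + q * ∫ y in a..z, Wpq (z - y) * Wp y)) := by
  set F : ℝ → ℝ := fun x => Wp x + q * ∫ y in a..x, Wpq (x - y) * Wp y
  have hWp0 : ∀ x ≤ 0, Wp x = 0 := fun _ => eq_zero_of_nonpos_of_continuous hWpcont hWpneg
  have hWpq0 : ∀ x ≤ 0, Wpq x = 0 := fun _ => eq_zero_of_nonpos_of_continuous hWpqcont hWpqneg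
  have hF : Continuous F :=
    hWpcont.add (continuous_const.mul (continuous_integral_mul_sub hWpqcont hWpcont a))
  have hFeq : ∀ x ≥ (0:ℝ), F x = Wp x + q * ∫ z in a..x, Wp (x - z) * F z := fun x _ => by
    simp only [F, integral_conv_eq_of_resolvent hWpcont hWpqcont hWp0 hWpq0 hres x]
  refine ⟨hFeq, ?_⟩
  have hG := isVolterraSolution_sub_integral ha.le hab.le hWpcont hF hWp0 hFeq
  have hGcont : Continuous fun x => F x - q * ∫ z in b..x, Wp (x - z) * F z :=
    hF.sub (continuous_const.mul (continuous_integral_mul_sub hWpcont hF b))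
  have hωb : LocallyBdd ((Ioo a b).indicator fun _ => (1:ℝ)) := fun _ _ =>
    ⟨1, fun z _ => by simpa using norm_indicator_le_norm_self (fun _ => (1:ℝ)) z⟩
  exact IsVolterraSolution.eq_of_locallyBdd heq hG hWpcont hWpmono hWpneg hWpcont.measurable
    (measurable_const.indicator measurableSet_Ioo) hωb h𝒲 hGcont.locallyBdd

theorem occupation_scale_global
    (a b p q : ℝ) (ha : 0 < a) (hab : a < b) (hp : 0 ≤ p) (hq : 0 ≤ q)
    (Wp Wpq 𝒲 : ℝ → ℝ)
    (hWpcont : Continuous Wp) (hWpqcont : Continuous Wpq)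
    (hWpmono : MonotoneOn Wp (Set.Ici 0)) (hWpqmono : MonotoneOn Wpq (Set.Ici 0))
    (hWpneg : ∀ x < (0:ℝ), Wp x = 0) (hWpqneg : ∀ x < (0:ℝ), Wpq x = 0)
    (hres : ∀ x ≥ (0:ℝ),
      Wpq x - Wp x = q * ∫ y in (0:ℝ)..x, Wpq (x - y) * Wp y)
    (h𝒲 : LocallyBdd 𝒲)
    (heq : ∀ x ≥ (0:ℝ), 𝒲 x = Wp x +
      q * ∫ z in (0:ℝ)..x, Wp (x - z) * Set.indicator (Set.Ioo a b) (fun _ => (1:ℝ)) z * 𝒲 z) :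
    -- with 𝒲_a^{(p,q)}(x) := W^{(p)}(x) + q ∫_a^x W^{(p+q)}(x-y) W^{(p)}(y) dy :
    (∀ x ≥ (0:ℝ),
      (Wp x + q * ∫ y in a..x, Wpq (x - y) * Wp y) =
        Wp x + q * ∫ z in a..x, Wp (x - z) * (Wp z + q * ∫ y in a..z, Wpq (z - y) * Wp y)) ∧
    (∀ x ≥ (0:ℝ),
      𝒲 x = (Wp x + q * ∫ y in a..x, Wpq (x - y) * Wp y) -
        q * ∫ z in b..x, Wp (x - z) * (Wp z + q * ∫ y in a..z, Wpq (z - y) * Wp y)) :=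
  occupation_scale_global_general a b q ha hab Wp Wpq 𝒲 hWpcont hWpqcont hWpmono hWpneg hWpqneg hres
    h𝒲 heq
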